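/- For every non-negative integer n and complex z: |P_n(z)| ≤ |z + √(z²-1)|^n, where the branch of the square root is chosen so that |z + √(z²-1)| ≥ 1. -/

import Mathlib

/-!
Put `u = z + w` and `v = z - w`, so that `u v = 1` and `u + v = 2 z`. The coefficients
`cₙ = ∑_{i+j=n} C(2i,i) C(2j,j) uⁱ vʲ` of `(1 - 4uX)^(-1/2) (1 - 4vX)^(-1/2)` satisfy, by the
first-order differential equation of that product, the same three-term recurrence as `4ⁿ Pₙ(z)`,
and both start with `1, 4z`; hence `4ⁿ Pₙ(z) = cₙ`, a discrete form of Laplace's integral.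
As `‖v‖ = 1 / ‖u‖ ≤ 1 ≤ ‖u‖`, every monomial `uⁱ vʲ` has norm at most `‖u‖ⁿ`, and
`∑_{i+j=n} C(2i,i) C(2j,j) = 4ⁿ` (the case `u = v = 1`), so `‖Pₙ(z)‖ ≤ ‖u‖ⁿ`.
-/

open Finset Complex

/-- Legendre polynomial of degree `n`, as a function on `ℂ`. -/
noncomputable def legendreP (n : ℕ) (z : ℂ) : ℂ :=
  (2 : ℂ) ^ (-(n : ℤ)) * ∑ k ∈ Finset.range (n / 2 + 1),
    (-1 : ℂ) ^ k * (n.choose k) * ((2 * n - 2 * k).choose n) * z ^ (n - 2 * k)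

open PowerSeries Nat

theorem eq_of_two_step_rec {R : Type*} [Ring R] [NoZeroDivisors R] {a b r p q : ℕ → R}
    (hr : ∀ n, r n ≠ 0) (ha : ∀ n, r n * a (n + 2) = p n * a (n + 1) + q n * a n)
    (hb : ∀ n, r n * b (n + 2) = p n * b (n + 1) + q n * b n) (h0 : a 0 = b 0)
    (h1 : a 1 = b 1) : a = b := by
  funext n
  induction n using Nat.twoStepInduction with
  | zero => exact h0
  | one => exact h1
  | more n hn hn1 => exact mul_left_cancel₀ (hr n) (by rw [ha, hb, hn, hn1])

section CentralBinomSeries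

variable {R : Type*} [CommRing R]

theorem derivative_rescale (a : R) (f : R⟦X⟧) :
    d⁄dX R (rescale a f) = C a * rescale a (d⁄dX R f) := by
  ext n
  simp only [coeff_derivative, coeff_rescale, coeff_C_mul]
  ring

theorem coeff_X_mul_derivative (f : R⟦X⟧) (n : ℕ) :
    coeff n (X * d⁄dX R f) = n * coeff n f := by
  rcases n with _ | n
  · simp
  · rw [coeff_succ_X_mul, coeff_derivative]
    push_cast
    ring

variable (R) in
noncomputable def centralBinomSeries : R⟦X⟧ := mk fun n => (centralBinom n : R)

variable (R) in
theorem one_sub_four_X_mul_derivative_centralBinomSeries :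
    (1 - 4 * X) * d⁄dX R (centralBinomSeries R) = 2 * centralBinomSeries R := by
  ext n
  rw [sub_mul, one_mul, mul_assoc, map_sub, ← map_ofNat C, ← map_ofNat C, coeff_C_mul,
    coeff_C_mul]
  rcases n with _ | n
  · simp [centralBinomSeries, coeff_derivative, centralBinom]
  · have h := congrArg (Nat.cast (R := R)) (succ_mul_centralBinom_succ (n + 1))
    simp only [coeff_succ_X_mul, coeff_derivative, centralBinomSeries, coeff_mk]
    push_cast at h ⊢
    linear_combination h

/-- For `u v = 1` and `u + v = 2z` this is `(1 - 8zX + 16X²)^(-1/2)`, the generating function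
of the `4ⁿ Pₙ(z)`. -/
noncomputable def centralBinomProd (u v : R) : R⟦X⟧ :=
  rescale u (centralBinomSeries R) * rescale v (centralBinomSeries R)

theorem coeff_centralBinomProd (u v : R) (n : ℕ) :
    coeff n (centralBinomProd u v) =
      ∑ p ∈ antidiagonal n, u ^ p.1 * p.1.centralBinom * (v ^ p.2 * p.2.centralBinom) := by
  simp only [centralBinomProd, coeff_mul, coeff_rescale, centralBinomSeries, coeff_mk]

theorem coeff_zero_centralBinomProd (u v : R) : coeff 0 (centralBinomProd u v) = 1 := by
  simp [coeff_centralBinomProd]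

theorem coeff_one_centralBinomProd (u v : R) :
    coeff 1 (centralBinomProd u v) = 2 * u + 2 * v := by
  simp [coeff_centralBinomProd, sum_antidiagonal_succ, centralBinom, mul_comm, add_comm]

theorem one_sub_mul_one_sub_mul_derivative_centralBinomProd (u v : R) :
    (1 - 4 * C u * X) * (1 - 4 * C v * X) * d⁄dX R (centralBinomProd u v) =
      (2 * (C u + C v) - 16 * C u * C v * X) * centralBinomProd u v := by
  have hu := congrArg (rescale u) (one_sub_four_X_mul_derivative_centralBinomSeries R)
  have hv := congrArg (rescale v) (one_sub_four_X_mul_derivative_centralBinomSeries R)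
  simp only [map_mul, map_sub, map_one, map_ofNat, rescale_X] at hu hv
  rw [centralBinomProd, Derivation.leibniz, smul_eq_mul, smul_eq_mul, derivative_rescale,
    derivative_rescale]
  linear_combination C v * (1 - 4 * C u * X) * rescale u (centralBinomSeries R) * hv +
    C u * (1 - 4 * C v * X) * rescale v (centralBinomSeries R) * hu

theorem coeff_centralBinomProd_add_two (u v : R) (n : ℕ) :
    (n + 2) * coeff (n + 2) (centralBinomProd u v) =
      2 * (2 * n + 3) * (u + v) * coeff (n + 1) (centralBinomProd u v) -
        16 * (n + 1) * (u * v) * coeff n (centralBinomProd u v) := by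
  set F := centralBinomProd u v
  -- multiplied by `X`, so that `d/dX` only enters through the Euler operator `X d/dX`
  have hF : X * d⁄dX R F - C (4 * (u + v)) * (X * (X * d⁄dX R F)) +
      C (16 * (u * v)) * (X * (X * (X * d⁄dX R F))) =
      C (2 * (u + v)) * (X * F) - C (16 * (u * v)) * (X * (X * F)) := by
    simp only [map_mul, map_add, map_ofNat]
    linear_combination X * one_sub_mul_one_sub_mul_derivative_centralBinomProd u v
  have h := congrArg (coeff (n + 2)) hF
  simp only [map_sub, map_add, coeff_C_mul, coeff_succ_X_mul, coeff_derivative,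
    coeff_X_mul_derivative] at h
  push_cast at h
  linear_combination h

end CentralBinomSeries

theorem sum_antidiagonal_centralBinom_mul (n : ℕ) :
    ∑ p ∈ antidiagonal n, p.1.centralBinom * p.2.centralBinom = 4 ^ n := by
  have h : (fun n => coeff n (centralBinomProd (1 : ℚ) 1)) = fun n => 4 ^ n :=
    eq_of_two_step_rec (r := fun n => n + 2) (p := fun n => 4 * (2 * n + 3))
      (q := fun n => -16 * (n + 1)) (fun n => by positivity)
      (fun n => by linear_combination coeff_centralBinomProd_add_two (1 : ℚ) 1 n)
      (fun n => by ring) (coeff_zero_centralBinomProd 1 1)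
      (by rw [coeff_one_centralBinomProd]; norm_num)
  have hn := congrFun h n
  simp only [coeff_centralBinomProd, one_pow, one_mul] at hn
  exact_mod_cast hn

theorem choose_mul_choose_eq_zero {n k : ℕ} (h : n < 2 * k) :
    n.choose k * (2 * n - 2 * k).choose n = 0 := by
  rcases le_or_gt k n with hk | hk
  · rw [choose_eq_zero_of_lt (by omega : 2 * n - 2 * k < n), mul_zero]
  · rw [choose_eq_zero_of_lt hk, zero_mul]

theorem add_two_mul_choose_mul_choose (n j : ℕ) :
    (n + 2) * ((n + 2).choose (j + 1) * (2 * (n + 2) - 2 * (j + 1)).choose (n + 2)) =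
      2 * (2 * n + 3) * ((n + 1).choose (j + 1) * (2 * (n + 1) - 2 * (j + 1)).choose (n + 1)) +
        4 * (n + 1) * (n.choose j * (2 * n - 2 * j).choose n) := by
  rcases lt_or_ge n (2 * j) with hnj | hjn
  · simp only [choose_mul_choose_eq_zero hnj,
      choose_mul_choose_eq_zero (by omega : n + 1 < 2 * (j + 1)),
      choose_mul_choose_eq_zero (by omega : n + 2 < 2 * (j + 1)), mul_zero, add_zero]
  obtain ⟨m, rfl⟩ : ∃ m, n = 2 * j + m := ⟨n - 2 * j, by omega⟩
  rw [show 2 * (2 * j + m + 2) - 2 * (j + 1) = 2 * j + 2 * m + 2 by omega,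
    show 2 * (2 * j + m + 1) - 2 * (j + 1) = 2 * j + 2 * m by omega,
    show 2 * (2 * j + m) - 2 * j = 2 * j + 2 * m by omega]
  have f1 := add_one_mul_choose_eq (2 * j + m) j
  have f2 := add_one_mul_choose_eq (2 * j + m + 1) j
  have f3 := choose_mul_succ_eq (2 * j + m) j
  have f4 := choose_succ_right_eq (2 * j + 2 * m) (2 * j + m)
  have f5 := add_one_mul_choose_eq (2 * j + 2 * m) (2 * j + m)
  have f6 := add_one_mul_choose_eq (2 * j + 2 * m + 1) (2 * j + m + 1)
  rw [show 2 * j + m + 1 - j = j + m + 1 by omega] at f3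
  rw [show 2 * j + 2 * m - (2 * j + m) = m by omega] at f4
  qify at f1 f2 f3 f4 f5 f6 ⊢
  -- every binomial coefficient is a rational multiple of one of these two
  set x := ((2 * j + m).choose j : ℚ)
  set y := ((2 * j + 2 * m).choose (2 * j + m) : ℚ)
  have e1 : ((2 * j + m + 1).choose (j + 1) : ℚ) = (2 * j + m + 1) * x / (j + 1) := by
    rw [eq_div_iff (by positivity)]; linear_combination -f1
  have e2 : ((2 * j + m + 1).choose j : ℚ) = (2 * j + m + 1) * x / (j + m + 1) := by
    rw [eq_div_iff (by positivity)]; linear_combination -f3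
  have e3 : ((2 * j + m + 2).choose (j + 1) : ℚ) =
      (2 * j + m + 2) * ((2 * j + m + 1).choose j : ℚ) / (j + 1) := by
    rw [eq_div_iff (by positivity)]; linear_combination -f2
  have e4 : ((2 * j + 2 * m).choose (2 * j + m + 1) : ℚ) = m * y / (2 * j + m + 1) := by
    rw [eq_div_iff (by positivity)]; linear_combination f4
  have e5 : ((2 * j + 2 * m + 1).choose (2 * j + m + 1) : ℚ) =
      (2 * j + 2 * m + 1) * y / (2 * j + m + 1) := by
    rw [eq_div_iff (by positivity)]; linear_combination -f5
  have e6 : ((2 * j + 2 * m + 2).choose (2 * j + m + 2) : ℚ) =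
      (2 * j + 2 * m + 2) * ((2 * j + 2 * m + 1).choose (2 * j + m + 1) : ℚ) /
        (2 * j + m + 2) := by
    rw [eq_div_iff (by positivity)]; linear_combination -f6
  rw [e3, e2, e6, e5, e1, e4]
  field_simp
  ring

noncomputable def legendreTerm (n : ℕ) (z : ℂ) (k : ℕ) : ℂ :=
  (-1 : ℂ) ^ k * (n.choose k) * ((2 * n - 2 * k).choose n) * z ^ (n - 2 * k)

theorem legendreTerm_eq_zero {n k : ℕ} (z : ℂ) (h : n < 2 * k) : legendreTerm n z k = 0 := by
  have h0 := congrArg (Nat.cast (R := ℂ)) (choose_mul_choose_eq_zero h)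
  push_cast at h0
  rw [legendreTerm, mul_assoc ((-1 : ℂ) ^ k), h0, mul_zero, zero_mul]

theorem legendreTerm_zero (n : ℕ) (z : ℂ) : legendreTerm n z 0 = centralBinom n * z ^ n := by
  simp [legendreTerm, centralBinom]

theorem add_two_mul_legendreTerm_succ (n j : ℕ) (z : ℂ) :
    (n + 2) * legendreTerm (n + 2) z (j + 1) =
      2 * (2 * n + 3) * z * legendreTerm (n + 1) z (j + 1) - 4 * (n + 1) * legendreTerm n z j := by
  have h := congrArg (Nat.cast (R := ℂ)) (add_two_mul_choose_mul_choose n j)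
  push_cast at h
  have hshift : z * z ^ (n + 1 - 2 * (j + 1)) *
      ((n + 1).choose (j + 1) * (2 * (n + 1) - 2 * (j + 1)).choose (n + 1) : ℂ) =
      z ^ (n - 2 * j) *
        ((n + 1).choose (j + 1) * (2 * (n + 1) - 2 * (j + 1)).choose (n + 1) : ℂ) := by
    rcases lt_or_ge n (2 * j + 1) with hnj | hjn
    · rw [← Nat.cast_mul, choose_mul_choose_eq_zero (by omega), Nat.cast_zero, mul_zero,
        mul_zero]
    · rw [← _root_.pow_succ', show n + 1 - 2 * (j + 1) + 1 = n - 2 * j by omega]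
  simp only [legendreTerm, show n + 2 - 2 * (j + 1) = n - 2 * j by omega]
  linear_combination (-1 : ℂ) ^ (j + 1) * z ^ (n - 2 * j) * h -
    (-1 : ℂ) ^ (j + 1) * 2 * (2 * n + 3) * hshift

theorem two_pow_mul_legendreP_eq_sum {n m : ℕ} (hm : n < 2 * m) (z : ℂ) :
    2 ^ n * legendreP n z = ∑ k ∈ range m, legendreTerm n z k := by
  rw [legendreP, ← mul_assoc, zpow_neg, zpow_natCast,
    mul_inv_cancel₀ (pow_ne_zero _ two_ne_zero), one_mul]
  refine sum_subset (fun k hk => ?_) (fun k _ hk => ?_)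
  · simp only [mem_range] at hk ⊢; omega
  · exact legendreTerm_eq_zero z (by simp only [mem_range] at hk; omega)

theorem two_pow_mul_legendreP_add_two (n : ℕ) (z : ℂ) :
    (n + 2) * (2 ^ (n + 2) * legendreP (n + 2) z) =
      2 * (2 * n + 3) * z * (2 ^ (n + 1) * legendreP (n + 1) z) -
        4 * (n + 1) * (2 ^ n * legendreP n z) := by
  rw [two_pow_mul_legendreP_eq_sum (m := n + 3) (by omega),
    two_pow_mul_legendreP_eq_sum (m := n + 3) (by omega),
    two_pow_mul_legendreP_eq_sum (m := n + 2) (by omega), sum_range_succ' _ (n + 2),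
    sum_range_succ' _ (n + 2), mul_add, mul_add, mul_sum, mul_sum, mul_sum,
    sum_congr rfl fun j _ => add_two_mul_legendreTerm_succ n j z, sum_sub_distrib,
    legendreTerm_zero, legendreTerm_zero]
  have hlead := congrArg (Nat.cast (R := ℂ)) (succ_mul_centralBinom_succ (n + 1))
  push_cast at hlead
  linear_combination z ^ (n + 2) * hlead

theorem legendreP_zero (z : ℂ) : legendreP 0 z = 1 := by
  simp [legendreP]

theorem legendreP_one (z : ℂ) : legendreP 1 z = z := by
  simp [legendreP]

theorem four_pow_mul_legendreP_eq_coeff_centralBinomProd {u v : ℂ} (huv : u * v = 1) (n : ℕ) :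
    4 ^ n * legendreP n ((u + v) / 2) = coeff n (centralBinomProd u v) := by
  have h4 (m : ℕ) : (4 : ℂ) ^ m = 2 ^ m * 2 ^ m := by rw [← mul_pow]; norm_num
  refine congrFun (eq_of_two_step_rec (a := fun n => 4 ^ n * legendreP n ((u + v) / 2))
    (b := fun n => coeff n (centralBinomProd u v)) (r := fun n => (n : ℂ) + 2)
    (p := fun n => 2 * (2 * n + 3) * (u + v)) (q := fun n => -16 * (n + 1))
    (fun n => by exact_mod_cast succ_ne_zero (n + 1)) (fun n => ?_) (fun n => ?_) ?_ ?_) n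
  · simp only [h4]
    linear_combination 2 ^ (n + 2) * two_pow_mul_legendreP_add_two n ((u + v) / 2)
  · linear_combination coeff_centralBinomProd_add_two u v n -
      16 * (n + 1) * coeff n (centralBinomProd u v) * huv
  · rw [legendreP_zero, coeff_zero_centralBinomProd, pow_zero, one_mul]
  · rw [legendreP_one, coeff_one_centralBinomProd]
    ring

theorem norm_coeff_centralBinomProd_le {u v : ℂ} (hu : 1 ≤ ‖u‖) (hv : ‖v‖ ≤ 1) (n : ℕ) :
    ‖coeff n (centralBinomProd u v)‖ ≤ 4 ^ n * ‖u‖ ^ n := by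
  rw [coeff_centralBinomProd]
  calc _ ≤ ∑ p ∈ antidiagonal n, (p.1.centralBinom * p.2.centralBinom : ℝ) * ‖u‖ ^ n := by
        refine (norm_sum_le _ _).trans (sum_le_sum fun p hp => ?_)
        have huv : ‖u‖ ^ p.1 * ‖v‖ ^ p.2 ≤ ‖u‖ ^ n :=
          calc ‖u‖ ^ p.1 * ‖v‖ ^ p.2 ≤ ‖u‖ ^ p.1 * 1 := by
                gcongr; exact pow_le_one₀ (norm_nonneg v) hv
            _ ≤ ‖u‖ ^ n := by
                rw [mul_one]; exact pow_le_pow_right₀ hu (HasAntidiagonal.antidiagonal.fst_le hp)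
        simp only [norm_mul, norm_pow, Complex.norm_natCast]
        calc _ = (p.1.centralBinom * p.2.centralBinom : ℝ) * (‖u‖ ^ p.1 * ‖v‖ ^ p.2) := by ring
          _ ≤ _ := by gcongr
    _ = 4 ^ n * ‖u‖ ^ n := by
        rw [← sum_mul]
        exact_mod_cast congrArg (fun m : ℕ => (m : ℝ) * ‖u‖ ^ n)
          (sum_antidiagonal_centralBinom_mul n)

theorem legendre_bound (n : ℕ) (z w : ℂ) (hw : w ^ 2 = z ^ 2 - 1)
    (hbranch : 1 ≤ ‖z + w‖) :
    ‖legendreP n z‖ ≤ ‖z + w‖ ^ n := by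
  have huv : (z + w) * (z - w) = 1 := by linear_combination -hw
  have hv : ‖z - w‖ ≤ 1 := by
    have h := norm_mul (z + w) (z - w)
    rw [huv, norm_one] at h
    nlinarith [norm_nonneg (z - w)]
  have hP := four_pow_mul_legendreP_eq_coeff_centralBinomProd huv n
  rw [show (z + w + (z - w)) / 2 = z by ring] at hP
  have hbound := norm_coeff_centralBinomProd_le hbranch hv n
  rw [← hP, norm_mul, norm_pow, Complex.norm_ofNat] at hbound
  exact le_of_mul_le_mul_left hbound (by positivity)
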